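/- For all integers r ≥ s ≥ 1, the kernel of the reduction homomorphism Sp_{2n}(O/ϖ^r O) → Sp_{2n}(O/ϖ^s O) has cardinality q^{n(2n+1)(r−s)}. -/

import Mathlib

/-!
Induction on `r`. For `k ≥ 1` the reduction `O/ϖ^(k+1) → O/ϖ^k` is surjective with kernel
`I ≅ O/ϖ` of square zero, and `2` is a unit since `q` is odd. Over such a square-zero extension
every symplectic matrix lifts, and the lifts of `g` are the `h₀ + N` with `N J h₀ᵀ` symmetric
with entries in `I`. So every fibre of `Sp_{2n}(O/ϖ^(k+1)) → Sp_{2n}(O/ϖ^k)` has as many elements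
as there are symmetric `2n × 2n` matrices over `I`, namely `q^(n(2n+1))`.
-/

open Matrix

/-- The matrix `J = [[0, I'ₙ],[−I'ₙ, 0]]` where `I'ₙ` is the antidiagonal identity. -/
def Jmat (R : Type*) [CommRing R] (n : ℕ) : Matrix (Fin (2*n)) (Fin (2*n)) R :=
  Matrix.of fun i j =>
    if (i : ℕ) + (j : ℕ) = 2*n - 1 then (if (i : ℕ) < n then (1 : R) else -1) else 0

/-- The symplectic group `Sp_{2n}(R)` as a set of matrices. -/
def SpSet (n : ℕ) (R : Type*) [CommRing R] : Set (Matrix (Fin (2*n)) (Fin (2*n)) R) :=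
  {g | IsUnit g.det ∧ g * Jmat R n * gᵀ = Jmat R n}

/-- The symplectic Lie algebra `sp_{2n}(R)` as a set of matrices. -/
def spSet (n : ℕ) (R : Type*) [CommRing R] : Set (Matrix (Fin (2*n)) (Fin (2*n)) R) :=
  {X | X * Jmat R n + Jmat R n * Xᵀ = 0}

section Jmat

variable {R S : Type*} [CommRing R] [CommRing S] {n : ℕ}

lemma Jmat_transpose : (Jmat R n)ᵀ = -Jmat R n := by
  ext i j
  have := i.isLt
  have := j.isLt
  simp only [transpose_apply, Jmat, of_apply, Matrix.neg_apply]
  split_ifs <;> first | (exfalso; omega) | ring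

lemma Jmat_mul_Jmat : Jmat R n * Jmat R n = -1 := by
  ext i j
  have := i.isLt
  have := j.isLt
  let i' : Fin (2 * n) := ⟨2 * n - 1 - i, by omega⟩
  rw [mul_apply, Finset.sum_eq_single i']
  · simp only [Jmat, of_apply, Matrix.neg_apply, one_apply, Fin.ext_iff, i']
    split_ifs <;> first | (exfalso; omega) | ring
  · intro k _ hk
    have : (k : ℕ) ≠ 2 * n - 1 - i := fun h => hk (Fin.ext h)
    simp only [Jmat, of_apply]
    rw [if_neg (by omega), zero_mul]
  · exact fun h => absurd (Finset.mem_univ i') h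

lemma map_Jmat (f : R →+* S) : (Jmat R n).map f = Jmat S n := by
  ext i j
  simp only [map_apply, Jmat, of_apply]
  split_ifs <;> simp

lemma isUnit_det_of_mul_Jmat_mul_transpose {g : Matrix (Fin (2 * n)) (Fin (2 * n)) R}
    (hg : g * Jmat R n * gᵀ = Jmat R n) : IsUnit g.det := by
  have hJ : (Jmat R n).det * (Jmat R n).det = 1 := by
    rw [← det_mul, Jmat_mul_Jmat, det_neg, det_one, Fintype.card_fin, pow_mul]
    simp
  refine .of_mul_eq_one (g.det * (Jmat R n).det * (Jmat R n).det) ?_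
  calc g.det * (g.det * (Jmat R n).det * (Jmat R n).det)
      = (g * Jmat R n * gᵀ).det * (Jmat R n).det := by
        rw [det_mul, det_mul, det_transpose]; ring
    _ = 1 := by rw [hg, hJ]

lemma mem_SpSet_iff {g : Matrix (Fin (2 * n)) (Fin (2 * n)) R} :
    g ∈ SpSet n R ↔ g * Jmat R n * gᵀ = Jmat R n :=
  ⟨And.right, fun hg => ⟨isUnit_det_of_mul_Jmat_mul_transpose hg, hg⟩⟩

lemma map_mem_SpSet (f : R →+* S) {g : Matrix (Fin (2 * n)) (Fin (2 * n)) R}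
    (hg : g ∈ SpSet n R) : g.map f ∈ SpSet n S := by
  rw [mem_SpSet_iff] at hg ⊢
  rw [← map_Jmat f, ← transpose_map, ← Matrix.map_mul, ← Matrix.map_mul, hg]

end Jmat

section SquareZero

variable {R' R : Type*} [CommRing R'] [CommRing R] {π : R' →+* R}

lemma Matrix.mul_eq_zero_of_map_eq_zero {m : Type*} [Fintype m] (hπ : RingHom.ker π ^ 2 = ⊥)
    {A B : Matrix m m R'} (hA : A.map π = 0) (hB : B.map π = 0) : A * B = 0 := by
  ext i j
  refine Finset.sum_eq_zero fun k _ => ?_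
  have hmem : A i k * B k j ∈ RingHom.ker π ^ 2 :=
    pow_two (RingHom.ker π) ▸ Ideal.mul_mem_mul (congrFun (congrFun hA i) k)
      (congrFun (congrFun hB k) j)
  rwa [hπ, Ideal.mem_bot] at hmem

variable {n : ℕ}

lemma add_mul_Jmat_mul_transpose_add (hπ : RingHom.ker π ^ 2 = ⊥)
    (g : Matrix (Fin (2 * n)) (Fin (2 * n)) R') {N : Matrix (Fin (2 * n)) (Fin (2 * n)) R'}
    (hN : N.map π = 0) :
    (g + N) * Jmat R' n * (g + N)ᵀ
      = g * Jmat R' n * gᵀ + (N * Jmat R' n * gᵀ - (N * Jmat R' n * gᵀ)ᵀ) := by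
  have hNJN : N * Jmat R' n * Nᵀ = 0 :=
    mul_eq_zero_of_map_eq_zero hπ (by rw [Matrix.map_mul, hN, zero_mul])
      (by rw [transpose_map, hN, transpose_zero])
  have hT : (N * Jmat R' n * gᵀ)ᵀ = -(g * Jmat R' n * Nᵀ) := by
    rw [transpose_mul, transpose_mul, transpose_transpose, Jmat_transpose, neg_mul, mul_neg,
      mul_assoc]
  rw [hT, transpose_add, add_mul, add_mul, mul_add, mul_add, hNJN]
  abel

theorem exists_mem_SpSet_map_eq (hsurj : Function.Surjective π) (hπ : RingHom.ker π ^ 2 = ⊥)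
    (h2 : IsUnit (2 : R')) {g : Matrix (Fin (2 * n)) (Fin (2 * n)) R} (hg : g ∈ SpSet n R) :
    ∃ h ∈ SpSet n R', h.map π = g := by
  set J := Jmat R' n
  set g' := g.map (Function.surjInv hsurj)
  have hg' : g'.map π = g := by
    ext i j
    exact Function.surjInv_eq hsurj _
  -- `g'` is symplectic up to an error `D` with entries in the kernel, removed by `N = D J g' / 2`.
  set D := g' * J * g'ᵀ - J with hD
  have hDπ : D.map π = 0 := by
    rw [Matrix.map_sub _ (map_sub π), Matrix.map_mul, Matrix.map_mul, transpose_map, hg',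
      map_Jmat, mem_SpSet_iff.mp hg, sub_self]
  have hDt : Dᵀ = -D := by
    rw [hD, transpose_sub, transpose_mul, transpose_mul, transpose_transpose, Jmat_transpose]
    noncomm_ring
  obtain ⟨t, ht⟩ := h2.exists_right_inv
  set E := t • D
  have hEπ : E.map π = 0 := by
    ext i j
    simpa [E] using congrArg (π t * ·) (congrFun (congrFun hDπ i) j)
  set N := E * J * g'
  have hNπ : N.map π = 0 := by rw [Matrix.map_mul, Matrix.map_mul, hEπ, zero_mul, zero_mul]
  have hT : N * J * g'ᵀ = -E := by
    have hEJD : E * J * D = 0 :=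
      mul_eq_zero_of_map_eq_zero hπ (by rw [Matrix.map_mul, hEπ, zero_mul]) hDπ
    calc N * J * g'ᵀ = E * J * (g' * J * g'ᵀ) := by simp only [N, mul_assoc]
      _ = E * J * (J + D) := by rw [hD, add_sub_cancel]
      _ = -E := by rw [mul_add, hEJD, add_zero, mul_assoc, Jmat_mul_Jmat, mul_neg_one]
  have hEt : Eᵀ = -E := by rw [transpose_smul, hDt, smul_neg]
  have hgJ : g' * J * g'ᵀ = J + (E + E) := by
    rw [← add_smul, ← two_mul, ht, one_smul, hD, add_sub_cancel]
  refine ⟨g' + N, mem_SpSet_iff.mpr ?_, ?_⟩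
  · rw [add_mul_Jmat_mul_transpose_add hπ g' hNπ, hT, transpose_neg, hEt, neg_neg, hgJ]
    abel
  · rw [Matrix.map_add _ (map_add π), hg', hNπ, add_zero]

lemma add_mem_SpSet_iff (hπ : RingHom.ker π ^ 2 = ⊥) {h₀ N : Matrix (Fin (2 * n)) (Fin (2 * n)) R'}
    (hh₀ : h₀ ∈ SpSet n R') (hN : N.map π = 0) :
    h₀ + N ∈ SpSet n R' ↔ (N * (Jmat R' n * h₀ᵀ))ᵀ = N * (Jmat R' n * h₀ᵀ) := by
  rw [mem_SpSet_iff, add_mul_Jmat_mul_transpose_add hπ h₀ hN, mem_SpSet_iff.mp hh₀, ← mul_assoc,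
    add_eq_left, sub_eq_zero, eq_comm]

def symmetricKerEquivFiber (hπ : RingHom.ker π ^ 2 = ⊥)
    {h₀ : Matrix (Fin (2 * n)) (Fin (2 * n)) R'} (hh₀ : h₀ ∈ SpSet n R') :
    {T : Matrix (Fin (2 * n)) (Fin (2 * n)) R' // Tᵀ = T ∧ T.map π = 0} ≃
      {h : Matrix (Fin (2 * n)) (Fin (2 * n)) R' // h ∈ SpSet n R' ∧ h.map π = h₀.map π} :=
  let U := Jmat R' n * h₀ᵀ
  let V := -(Jmat R' n * h₀)
  have hVU : V * U = 1 := by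
    rw [neg_mul, mul_assoc, ← mul_assoc h₀, mem_SpSet_iff.mp hh₀, Jmat_mul_Jmat, neg_neg]
  have hUV : U * V = 1 := mul_eq_one_comm.mp hVU
  { toFun T := ⟨h₀ + T.1 * V, by
        have hN : (T.1 * V).map π = 0 := by rw [Matrix.map_mul, T.2.2, zero_mul]
        rw [add_mem_SpSet_iff hπ hh₀ hN, mul_assoc, hVU, mul_one, T.2.1],
      by rw [Matrix.map_add _ (map_add π), Matrix.map_mul, T.2.2, zero_mul, add_zero]⟩
    invFun h := ⟨(h.1 - h₀) * U, by
        have hN : (h.1 - h₀).map π = 0 := by rw [Matrix.map_sub _ (map_sub π), h.2.2, sub_self]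
        have := h.2.1
        rwa [← add_sub_cancel h₀ h.1, add_mem_SpSet_iff hπ hh₀ hN] at this,
      by rw [Matrix.map_mul, Matrix.map_sub _ (map_sub π), h.2.2, sub_self, zero_mul]⟩
    left_inv T := Subtype.ext (by simp only [add_sub_cancel_left, mul_assoc, hVU, mul_one])
    right_inv h := Subtype.ext (by simp only [mul_assoc, hUV, mul_one, add_sub_cancel]) }

end SquareZero

section SymmetricMatrix

variable {m α : Type*} [Fintype m]

def symmetricMatrixEquivSym2 : {A : Matrix m m α // Aᵀ = A} ≃ (Sym2 m → α) :=
  (Equiv.subtypeEquiv Matrix.of.symm fun _ =>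
    ⟨fun h i j => congrFun (congrFun h j) i, fun h => ext fun i j => h j i⟩).trans Sym2.lift

lemma card_symmetricMatrix :
    Nat.card {A : Matrix m m α // Aᵀ = A} = Nat.card α ^ (Fintype.card m + 1).choose 2 := by
  classical
  rw [Nat.card_congr symmetricMatrixEquivSym2, Nat.card_fun, Nat.card_eq_fintype_card (α := Sym2 m),
    Sym2.card]

lemma card_symmetricMatrix_map_eq_zero {R' R : Type*} [CommRing R'] [CommRing R] (π : R' →+* R) :
    Nat.card {T : Matrix m m R' // Tᵀ = T ∧ T.map π = 0}
      = Nat.card (RingHom.ker π) ^ (Fintype.card m + 1).choose 2 := by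
  rw [← card_symmetricMatrix]
  exact Nat.card_congr
    { toFun T := ⟨of fun i j => ⟨T.1 i j, congrFun (congrFun T.2.2 i) j⟩, by
        ext i j
        exact congrFun (congrFun T.2.1 i) j⟩
      invFun A := ⟨A.1.map Subtype.val, by rw [← transpose_map, A.2], by
        ext i j
        exact (A.1 i j).2⟩
      left_inv _ := rfl
      right_inv _ := rfl }

end SymmetricMatrix

lemma Nat.card_eq_mul_of_forall_card_fiber_eq {α β : Type*} [Finite α] [Finite β] (f : α → β)
    {c : ℕ} (hf : ∀ b, Nat.card {a // f a = b} = c) : Nat.card α = Nat.card β * c := by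
  have := Fintype.ofFinite β
  rw [← Nat.card_congr (Equiv.sigmaFiberEquiv f), Nat.card_sigma,
    Finset.sum_congr rfl fun b _ => hf b, Finset.sum_const, smul_eq_mul, Finset.card_univ,
    Nat.card_eq_fintype_card]

def SpKer (n : ℕ) {R S : Type*} [CommRing R] [CommRing S] (f : R →+* S) :
    Set (Matrix (Fin (2 * n)) (Fin (2 * n)) R) :=
  {g | g ∈ SpSet n R ∧ g.map f = 1}

section SpKer

variable {R' R R₀ : Type*} [CommRing R'] [CommRing R] [CommRing R₀] {n : ℕ}

lemma card_SpKer_id : Nat.card (SpKer n (RingHom.id R)) = 1 := by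
  have : SpKer n (RingHom.id R) = {1} := by
    ext g
    simp only [SpKer, Set.mem_ofPred_eq, Set.mem_singleton_iff]
    exact ⟨And.right, fun h => ⟨h ▸ mem_SpSet_iff.mpr (by simp), h⟩⟩
  rw [this, Nat.card_unique]

theorem card_fiber_SpSet {π : R' →+* R} (hsurj : Function.Surjective π)
    (hπ : RingHom.ker π ^ 2 = ⊥) (h2 : IsUnit (2 : R')) {g : Matrix (Fin (2 * n)) (Fin (2 * n)) R}
    (hg : g ∈ SpSet n R) :
    Nat.card {h // h ∈ SpSet n R' ∧ h.map π = g}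
      = Nat.card (RingHom.ker π) ^ (n * (2 * n + 1)) := by
  obtain ⟨h₀, hh₀, rfl⟩ := exists_mem_SpSet_map_eq hsurj hπ h2 hg
  have hchoose : (2 * n + 1).choose 2 = n * (2 * n + 1) := by
    rw [Nat.choose_two_right, Nat.add_sub_cancel,
      show (2 * n + 1) * (2 * n) = 2 * (n * (2 * n + 1)) by ring]
    exact Nat.mul_div_cancel_left _ two_pos
  rw [← Nat.card_congr (symmetricKerEquivFiber hπ hh₀), card_symmetricMatrix_map_eq_zero,
    Fintype.card_fin, hchoose]

theorem card_SpKer_comp [Finite R'] {π : R' →+* R} (hsurj : Function.Surjective π)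
    (hπ : RingHom.ker π ^ 2 = ⊥) (h2 : IsUnit (2 : R')) (ρ : R →+* R₀) :
    Nat.card (SpKer n (ρ.comp π))
      = Nat.card (SpKer n ρ) * Nat.card (RingHom.ker π) ^ (n * (2 * n + 1)) := by
  have : Finite R := Finite.of_surjective π hsurj
  refine Nat.card_eq_mul_of_forall_card_fiber_eq
    (fun h : SpKer n (ρ.comp π) => (⟨h.1.map π, map_mem_SpSet π h.2.1, h.2.2⟩ : SpKer n ρ))
    fun g => ?_
  rw [← card_fiber_SpSet hsurj hπ h2 g.2.1]
  exact Nat.card_congr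
    { toFun h := ⟨h.1.1, h.1.2.1, congrArg Subtype.val h.2⟩
      invFun h := ⟨⟨h.1, h.2.1, (congrArg (·.map ρ) h.2.2).trans g.2.2⟩, Subtype.ext h.2.2⟩
      left_inv _ := rfl
      right_inv _ := rfl }

end SpKer

lemma Ideal.Quotient.ker_factor_sq_eq_bot {A : Type*} [CommRing A] {I J : Ideal A} (H : J ≤ I)
    (hIJ : I ^ 2 ≤ J) : RingHom.ker (Ideal.Quotient.factor H) ^ 2 = ⊥ := by
  rw [Ideal.Quotient.factor_ker, ← Ideal.map_pow, eq_bot_iff, ← Ideal.map_quotient_self J]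
  exact Ideal.map_mono hIJ

lemma two_ne_zero_of_odd_card {R : Type*} [Ring R] [Nontrivial R] (h : Odd (Nat.card R)) :
    (2 : R) ≠ 0 := by
  intro h2
  have hord : addOrderOf (1 : R) = 2 :=
    addOrderOf_eq_prime (by rw [two_nsmul, one_add_one_eq_two, h2]) one_ne_zero
  exact Nat.not_even_iff_odd.mpr h (even_iff_two_dvd.mpr (hord ▸ addOrderOf_dvd_natCard 1))

section DVR

variable {O : Type*} [CommRing O] (ϖ : O)

lemma span_pow_le_span_pow {s k : ℕ} (h : s ≤ k) : Ideal.span {ϖ ^ k} ≤ Ideal.span {ϖ ^ s} :=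
  Ideal.span_singleton_le_span_singleton.mpr (pow_dvd_pow ϖ h)

lemma card_ker_factor_span_pow_succ [IsDomain O] (hϖ : ϖ ≠ 0) (k : ℕ) :
    Nat.card (RingHom.ker (Ideal.Quotient.factor (span_pow_le_span_pow ϖ k.le_succ)))
      = Nat.card (O ⧸ Ideal.span {ϖ}) := by
  rw [Ideal.Quotient.factor_ker, ← Ideal.span_singleton_pow, ← Ideal.span_singleton_pow]
  exact (Nat.card_congr ((Ideal.quotEquivPowQuotPowSuccEquiv ⟨ϖ, rfl⟩
    (by simpa using hϖ) k).trans (Ideal.powQuotPowSuccEquivMapMkPowSuccPow _ k))).symm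

lemma finite_quotient_span_pow [IsDomain O] (hϖ : ϖ ≠ 0) (h : Nat.card (O ⧸ Ideal.span {ϖ}) ≠ 0)
    (k : ℕ) : Finite (O ⧸ Ideal.span {ϖ ^ k}) := by
  induction k with
  | zero =>
    rw [pow_zero, Ideal.span_singleton_one]
    infer_instance
  | succ k ih =>
    set π := Ideal.Quotient.factor (span_pow_le_span_pow ϖ k.le_succ)
    have : Finite (RingHom.ker π) :=
      Nat.finite_of_card_ne_zero (by rwa [card_ker_factor_span_pow_succ ϖ hϖ])
    have : Finite (_ ⧸ RingHom.ker π) := .of_equiv _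
      (RingHom.quotientKerEquivOfSurjective (Ideal.Quotient.factor_surjective _)).symm.toEquiv
    exact .of_ideal_quotient (RingHom.ker π)

lemma isUnit_two_of_odd_card [IsDomain O] [IsDiscreteValuationRing O] {ϖ : O} (hϖ : Irreducible ϖ)
    (h : Odd (Nat.card (O ⧸ Ideal.span {ϖ}))) : IsUnit (2 : O) := by
  have : Nontrivial (O ⧸ Ideal.span {ϖ}) := Ideal.Quotient.nontrivial_iff.mpr
    (hϖ.maximalIdeal_eq ▸ (IsLocalRing.maximalIdeal.isMaximal O).ne_top)
  rw [← IsLocalRing.notMem_maximalIdeal, hϖ.maximalIdeal_eq, ← Ideal.Quotient.eq_zero_iff_mem,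
    map_ofNat]
  exact two_ne_zero_of_odd_card h

theorem card_SpKer_factor_span_pow [IsDomain O] [IsDiscreteValuationRing O] {ϖ : O}
    (hϖ : Irreducible ϖ) {q : ℕ} (hq : Nat.card (O ⧸ Ideal.span {ϖ}) = q) (hodd : Odd q)
    {n s k : ℕ} (hs : 1 ≤ s) (hsk : s ≤ k) :
    Nat.card (SpKer n (Ideal.Quotient.factor (span_pow_le_span_pow ϖ hsk)))
      = q ^ (n * (2 * n + 1) * (k - s)) := by
  induction k, hsk using Nat.le_induction with
  | base => rw [Ideal.Quotient.factor_eq, card_SpKer_id, Nat.sub_self, mul_zero, pow_zero]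
  | succ k hsk ih =>
    have := finite_quotient_span_pow ϖ hϖ.ne_zero (hq ▸ hodd.pos.ne') (k + 1)
    have hsq : Ideal.span {ϖ ^ k} ^ 2 ≤ Ideal.span {ϖ ^ (k + 1)} := by
      rw [Ideal.span_singleton_pow, ← pow_mul]
      exact span_pow_le_span_pow ϖ (by omega)
    have h2 : IsUnit (2 : O ⧸ Ideal.span {ϖ ^ (k + 1)}) := by
      rw [← map_ofNat (Ideal.Quotient.mk _) 2]
      exact (isUnit_two_of_odd_card hϖ (hq ▸ hodd)).map _
    rw [← Ideal.Quotient.factor_comp (span_pow_le_span_pow ϖ k.le_succ)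
        (span_pow_le_span_pow ϖ hsk),
      card_SpKer_comp (Ideal.Quotient.factor_surjective _)
        (Ideal.Quotient.ker_factor_sq_eq_bot _ hsq) h2,
      ih, card_ker_factor_span_pow_succ ϖ hϖ.ne_zero, hq, ← pow_add, Nat.sub_add_comm hsk,
      mul_add_one _ (k - s)]

end DVR

theorem stmt11_general (n : ℕ)
    (O : Type*) [CommRing O] [IsDomain O] [IsDiscreteValuationRing O]
    (ϖ : O) (hϖ : Irreducible ϖ) (q : ℕ)
    (hq : Nat.card (O ⧸ Ideal.span {ϖ}) = q) (hodd : Odd q)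
    (r s : ℕ) (hs : 1 ≤ s) (hrs : s ≤ r) :
    Nat.card ↥{g : Matrix (Fin (2*n)) (Fin (2*n)) (O ⧸ Ideal.span {ϖ^r}) |
        g ∈ SpSet n (O ⧸ Ideal.span {ϖ^r}) ∧
        g.map (Ideal.Quotient.factor
          (Ideal.span_singleton_le_span_singleton.mpr (pow_dvd_pow ϖ hrs))) = 1}
      = q^(n*(2*n+1)*(r-s)) :=
  card_SpKer_factor_span_pow hϖ hq hodd hs hrs

/-- The kernel of the reduction homomorphism `Sp_{2n}(O/ϖ^r O) → Sp_{2n}(O/ϖ^s O)`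
has cardinality `q^{n(2n+1)(r−s)}`. -/
theorem stmt11 (n : ℕ) (hn : 1 ≤ n)
    (O : Type*) [CommRing O] [IsDomain O] [IsDiscreteValuationRing O]
    (ϖ : O) (hϖ : Irreducible ϖ) [IsAdicComplete (Ideal.span {ϖ}) O]
    [Finite (O ⧸ Ideal.span {ϖ})] (q : ℕ)
    (hq : Nat.card (O ⧸ Ideal.span {ϖ}) = q) (hodd : Odd q)
    (r s : ℕ) (hs : 1 ≤ s) (hrs : s ≤ r) :
    Nat.card ↥{g : Matrix (Fin (2*n)) (Fin (2*n)) (O ⧸ Ideal.span {ϖ^r}) |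
        g ∈ SpSet n (O ⧸ Ideal.span {ϖ^r}) ∧
        g.map (Ideal.Quotient.factor
          (Ideal.span_singleton_le_span_singleton.mpr (pow_dvd_pow ϖ hrs))) = 1}
      = q^(n*(2*n+1)*(r-s)) :=
  stmt11_general n O ϖ hϖ q hq hodd r s hs hrs
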